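/- Suppose c_j : ℝ → ℝ satisfy c_j' = (j+1) c_{j+1} + (u₀/c₀) Σ_{i=0}^j c_i c_{j−i}. Then for m ∈ {0,1} and n ≥ 1, (H^m_n)' = (2n−1+m) G^m_n + (2n−1+m) u₀ H^m_n. -/

import Mathlib

/-!
By Jacobi's formula `H' = tr (adj A · A')`, where `A = (c_{i+j+m})` and `A'` is again a Hankel
matrix, built from the sequence `(K + 1) c_{K+1} + (u₀ / c₀) Σ_{l ≤ K} c_l c_{K-l}`.

Split the weight `i + j + m + 1` as `i + (j + m + 1)` and expand the first part along rows, the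
second along columns. Row `i` of the first part is a multiple of row `i + 1` of `A`, so only the
last row survives and gives `G`; likewise for columns, by symmetry of `A`. This yields
`(n - 1) G + (n + m) G`.

The convolution part is `L A + A Lᵀ`, with `L` the lower triangular Toeplitz matrix of `c`, minus
the matrix `(c_i c_j)` when `m = 0`. Since `tr (adj A · L A) = tr (adj A · A Lᵀ) = tr L · det A`,
it contributes `(2n - 1 + m) c₀ H`.
-/

/-- Time-dependent Hankel determinant `H^m_n(t) = det(c_{i+j+m}(t))`. -/
noncomputable def Hf (c : ℕ → ℝ → ℝ) (m n : ℕ) (t : ℝ) : ℝ :=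
  (Matrix.of fun i j : Fin n => c (i.val + j.val + m) t).det

/-- `G^m_n(t)`: the Hankel determinant `H^m_n(t)` with its last row shifted
forward by one index; by convention `G^m_0 = 0`. -/
noncomputable def Gf (c : ℕ → ℝ → ℝ) (m n : ℕ) (t : ℝ) : ℝ :=
  if n = 0 then 0 else
  (Matrix.of fun i j : Fin n =>
    if i.val = n - 1 then c (m + n + j.val) t else c (i.val + j.val + m) t).det

open Matrix Finset

namespace Matrix

variable {R ι : Type*} [CommRing R] [Fintype ι] [DecidableEq ι]

theorem trace_adjugate_mul_eq_sum_det_updateCol (A M : Matrix ι ι R) :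
    trace (adjugate A * M) = ∑ j, (A.updateCol j fun i => M i j).det := by
  simp only [← cramer_apply, cramer_eq_adjugate_mulVec, mulVec, dotProduct, trace, diag_apply,
    mul_apply]

theorem trace_adjugate_mul_eq_sum_det_updateRow (A M : Matrix ι ι R) :
    trace (adjugate A * M) = ∑ i, (A.updateRow i fun j => M i j).det := by
  rw [← trace_transpose, transpose_mul, trace_mul_comm, adjugate_transpose,
    trace_adjugate_mul_eq_sum_det_updateCol]
  refine sum_congr rfl fun i _ => ?_
  rw [show (fun k => Mᵀ k i) = fun j => M i j from rfl, updateCol_transpose, det_transpose]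

theorem trace_adjugate_mul_mul_self (A B : Matrix ι ι R) :
    trace (adjugate A * (B * A)) = trace B * A.det := by
  rw [← Matrix.mul_assoc, trace_mul_comm, ← Matrix.mul_assoc, mul_adjugate, smul_mul,
    Matrix.one_mul, trace_smul, smul_eq_mul, mul_comm]

theorem trace_adjugate_mul_self_mul (A B : Matrix ι ι R) :
    trace (adjugate A * (A * B)) = trace B * A.det := by
  rw [← Matrix.mul_assoc, adjugate_mul, smul_mul, Matrix.one_mul, trace_smul, smul_eq_mul,
    mul_comm]

theorem hasDerivAt_det {𝕜 : Type*} [NontriviallyNormedField 𝕜] {A : 𝕜 → Matrix ι ι 𝕜}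
    {A' : Matrix ι ι 𝕜} {t : 𝕜} (h : ∀ i j, HasDerivAt (fun s => A s i j) (A' i j) t) :
    HasDerivAt (fun s => (A s).det) (trace (adjugate (A t) * A')) t := by
  have hprod (σ : Equiv.Perm ι) : HasDerivAt (fun s => ∏ i, A s (σ i) i)
      (∑ j, (∏ i ∈ univ.erase j, A t (σ i) i) * A' (σ j) j) t := by
    simpa only [smul_eq_mul] using HasDerivAt.fun_finsetProd fun i _ => h (σ i) i
  have hdet := HasDerivAt.fun_sum fun σ (_ : σ ∈ univ) =>
    (hprod σ).const_mul (Equiv.Perm.sign σ : 𝕜)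
  simp only [← det_apply'] at hdet
  refine hdet.congr_deriv ?_
  rw [trace_adjugate_mul_eq_sum_det_updateCol]
  simp_rw [mul_sum]
  rw [sum_comm]
  refine sum_congr rfl fun j _ => ?_
  rw [det_apply']
  refine sum_congr rfl fun σ _ => ?_
  rw [← mul_prod_erase _ _ (mem_univ j), updateCol_self, mul_comm (A' _ _)]
  congr 2
  exact prod_congr rfl fun i hi => (updateCol_ne (ne_of_mem_erase hi)).symm

end Matrix

/-- The two sums run over `l ∈ [j + m, i + j + m]` and `l ∈ [0, j]`: for `m = 1` they tile
`[0, i + j + 1]`, for `m = 0` they overlap in `l = j`. -/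
theorem sum_range_mul_add_sum_range_mul {R : Type*} [CommRing R] {m : ℕ} (hm : m = 0 ∨ m = 1)
    (a : ℕ → R) (i j : ℕ) :
    ∑ k ∈ range (i + 1), a (i - k) * a (k + j + m) + ∑ k ∈ range (j + 1), a (j - k) * a (k + i + m)
      = ∑ l ∈ range (i + j + m + 1), a l * a (i + j + m - l) + if m = 0 then a i * a j else 0 := by
  have hleft : ∑ k ∈ range (i + 1), a (i - k) * a (k + j + m)
      = ∑ k ∈ range (i + 1), a (j + m + k) * a (i + j + m - (j + m + k)) := by
    refine sum_congr rfl fun k hk => ?_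
    have := mem_range.mp hk
    rw [mul_comm, show i + j + m - (j + m + k) = i - k by omega,
      show j + m + k = k + j + m by omega]
  have hright : ∑ k ∈ range (j + 1), a (j - k) * a (k + i + m)
      = ∑ l ∈ range (j + 1), a l * a (i + j + m - l) := by
    rw [← sum_range_reflect]
    refine sum_congr rfl fun k hk => ?_
    have := mem_range.mp hk
    rw [show j - (j + 1 - 1 - k) = k by omega, show j + 1 - 1 - k + i + m = i + j + m - k by omega]
  rw [hleft, hright]
  rcases hm with rfl | rfl
  · simp only [add_zero, if_true]
    rw [sum_range_succ', show i + j + 1 = (j + 1) + i by omega, sum_range_add _ (j + 1) i,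
      add_zero, Nat.add_sub_cancel]
    have hshift : ∀ k ∈ range i, a (j + (k + 1)) * a (i + j - (j + (k + 1)))
        = a (j + 1 + k) * a (i + j - (j + 1 + k)) := fun k _ => by rw [← add_assoc, add_right_comm]
    rw [sum_congr rfl hshift]
    ring
  · rw [if_neg one_ne_zero, add_zero, add_comm, show i + j + 1 + 1 = (j + 1) + (i + 1) by omega,
      sum_range_add _ (j + 1) (i + 1), add_right_comm i j 1]

section Hankel

variable {R : Type*} (a : ℕ → R) (m : ℕ)

def hankel (n : ℕ) : Matrix (Fin n) (Fin n) R :=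
  of fun i j => a (i + j + m)

theorem hankel_transpose (n : ℕ) : (hankel a m n)ᵀ = hankel a m n := by
  ext i j
  simp only [hankel, transpose_apply, of_apply, add_comm (j : ℕ)]

variable [CommRing R]

def toeplitzLower (n : ℕ) : Matrix (Fin n) (Fin n) R :=
  of fun i j => if (j : ℕ) ≤ i then a (i - j) else 0

theorem trace_toeplitzLower (n : ℕ) : trace (toeplitzLower a n) = n * a 0 := by
  simp [trace, toeplitzLower]

theorem toeplitzLower_mul_hankel_apply {n : ℕ} (i j : Fin n) :
    (toeplitzLower a n * hankel a m n) i j = ∑ k ∈ range (i + 1), a (i - k) * a (k + j + m) := by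
  simp only [mul_apply, toeplitzLower, hankel, of_apply, ite_mul, zero_mul]
  rw [Fin.sum_univ_eq_sum_range (fun k => if k ≤ i then a (i - k) * a (k + j + m) else 0),
    ← sum_filter]
  congr 1
  ext k
  simp only [mem_filter, mem_range]
  omega

theorem det_updateCol_hankel {n : ℕ} (j : Fin n) (v : Fin n → R) :
    ((hankel a m n).updateCol j v).det = ((hankel a m n).updateRow j v).det := by
  rw [← hankel_transpose, updateCol_transpose, det_transpose, hankel_transpose]

theorem sum_det_updateRow_hankel_shift (w : ℕ → R) (k : ℕ) :
    ∑ i : Fin (k + 1), ((hankel a m (k + 1)).updateRow i fun j => w i * a (i + 1 + j + m)).det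
      = w k * ((hankel a m (k + 1)).updateRow (Fin.last k) fun j => a (k + 1 + j + m)).det := by
  have hrow (i : Fin (k + 1)) :
      (fun j : Fin (k + 1) => w i * a (i + 1 + j + m))
        = w i • fun j : Fin (k + 1) => a (i + 1 + j + m) := rfl
  simp only [hrow, det_updateRow_smul]
  rw [Fin.sum_univ_castSucc, Fin.val_last, add_eq_right]
  refine sum_eq_zero fun i _ => ?_
  have hsucc : (fun j : Fin (k + 1) => a (i.castSucc + 1 + j + m)) = hankel a m (k + 1) i.succ :=
    rfl
  rw [hsucc, det_updateRow_eq_zero Fin.castSucc_lt_succ.ne', mul_zero]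

theorem trace_adjugate_hankel_mul_hankel_derivative (k : ℕ) :
    trace (adjugate (hankel a m (k + 1)) *
        hankel (fun K => ((K + 1 : ℕ) : R) * a (K + 1)) m (k + 1))
      = ((2 * k + 1 + m : ℕ) : R) *
          ((hankel a m (k + 1)).updateRow (Fin.last k) fun j => a (k + 1 + j + m)).det := by
  have hsplit : hankel (fun K => ((K + 1 : ℕ) : R) * a (K + 1)) m (k + 1)
      = of (fun i j : Fin (k + 1) => (i : R) * a (i + 1 + j + m))
        + of (fun i j : Fin (k + 1) => ((j + m + 1 : ℕ) : R) * a (j + 1 + i + m)) := by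
    ext i j
    simp only [hankel, Matrix.add_apply, of_apply]
    rw [show (i : ℕ) + 1 + j + m = i + j + m + 1 by omega,
      show (j : ℕ) + 1 + i + m = i + j + m + 1 by omega]
    push_cast
    ring
  have hrows := sum_det_updateRow_hankel_shift a m (fun l => (l : R)) k
  have hcols := sum_det_updateRow_hankel_shift a m (fun l => ((l + m + 1 : ℕ) : R)) k
  rw [hsplit, Matrix.mul_add, trace_add, trace_adjugate_mul_eq_sum_det_updateRow,
    trace_adjugate_mul_eq_sum_det_updateCol]
  simp only [of_apply, det_updateCol_hankel] at hrows hcols ⊢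
  rw [hrows, hcols]
  push_cast
  ring

theorem trace_adjugate_hankel_mul_vecMulVec (k : ℕ) :
    trace (adjugate (hankel a 0 (k + 1)) * vecMulVec (fun i : Fin (k + 1) => a i) fun j : Fin (k + 1) => a j)
      = a 0 * (hankel a 0 (k + 1)).det := by
  have hcol (j : Fin (k + 1)) :
      (fun i : Fin (k + 1) => a i * a j) = a j • fun i => hankel a 0 (k + 1) i 0 := by
    ext i
    simp [hankel, mul_comm]
  simp only [trace_adjugate_mul_eq_sum_det_updateCol, vecMulVec_apply, hcol, det_updateCol_smul]
  rw [Fin.sum_univ_succ, updateCol_eq_self]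
  simp [det_updateCol_eq_zero (Fin.succ_ne_zero _).symm]

theorem trace_adjugate_hankel_mul_hankel_selfConv (hm : m = 0 ∨ m = 1) (k : ℕ) :
    trace (adjugate (hankel a m (k + 1)) *
        hankel (fun K => ∑ l ∈ range (K + 1), a l * a (K - l)) m (k + 1))
      = ((2 * k + 1 + m : ℕ) : R) * a 0 * (hankel a m (k + 1)).det := by
  set A := hankel a m (k + 1)
  set L := toeplitzLower a (k + 1)
  have hsym : trace (adjugate A * (L * A + A * Lᵀ)) = (2 * (k + 1) : ℕ) * a 0 * A.det := by
    rw [Matrix.mul_add, trace_add, trace_adjugate_mul_mul_self, trace_adjugate_mul_self_mul,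
      trace_transpose, trace_toeplitzLower]
    push_cast
    ring
  have hentry (i j : Fin (k + 1)) : (L * A + A * Lᵀ) i j
      = ∑ l ∈ range (i + j + m + 1), a l * a (i + j + m - l) + if m = 0 then a i * a j else 0 := by
    rw [Matrix.add_apply, show A * Lᵀ = (L * A)ᵀ by rw [transpose_mul, hankel_transpose],
      transpose_apply, toeplitzLower_mul_hankel_apply, toeplitzLower_mul_hankel_apply,
      sum_range_mul_add_sum_range_mul hm]
  rcases hm with rfl | rfl
  · have hsplit : hankel (fun K => ∑ l ∈ range (K + 1), a l * a (K - l)) 0 (k + 1)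
        = L * A + A * Lᵀ - vecMulVec (fun i : Fin (k + 1) => a i) fun j : Fin (k + 1) => a j := by
      ext i j
      simp [hentry, hankel, vecMulVec_apply]
    rw [hsplit, Matrix.mul_sub, trace_sub, hsym, trace_adjugate_hankel_mul_vecMulVec]
    push_cast
    ring
  · have hsplit : hankel (fun K => ∑ l ∈ range (K + 1), a l * a (K - l)) 1 (k + 1)
        = L * A + A * Lᵀ := by
      ext i j
      simp [hentry, hankel]
    rw [hsplit, hsym]
    push_cast
    ring

end Hankel

/-- Under the Riccati system `c_j' = (j+1) c_{j+1} + (u₀/c₀) Σ_{i=0}^{j} c_i c_{j−i}`,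
one has `(H^m_n)' = (2n−1+m) G^m_n + (2n−1+m) u₀ H^m_n` for `m ∈ {0,1}`, `n ≥ 1`. -/
theorem deriv_hankel_nonautonomous (c : ℕ → ℝ → ℝ) (u₀ : ℝ → ℝ)
    (hc0 : ∀ t, c 0 t ≠ 0)
    (hc : ∀ j t, HasDerivAt (c j)
      ((j + 1 : ℕ) * c (j + 1) t +
        u₀ t / c 0 t * ∑ i ∈ Finset.range (j + 1), c i t * c (j - i) t) t)
    (m : ℕ) (hm : m = 0 ∨ m = 1) (n : ℕ) (hn : 1 ≤ n) (t : ℝ) :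
    HasDerivAt (fun s => Hf c m n s)
      (((2 * n - 1 + m : ℕ) : ℝ) * Gf c m n t +
        ((2 * n - 1 + m : ℕ) : ℝ) * u₀ t * Hf c m n t) t := by
  obtain ⟨k, rfl⟩ : ∃ k, n = k + 1 := ⟨n - 1, by omega⟩
  have hH : Hf c m (k + 1) t = (hankel (c · t) m (k + 1)).det := rfl
  have hG : Gf c m (k + 1) t
      = ((hankel (c · t) m (k + 1)).updateRow (Fin.last k) fun j => c (k + 1 + j + m) t).det := by
    rw [Gf, if_neg k.succ_ne_zero]
    congr 1
    ext i j
    simp only [of_apply, updateRow_apply, hankel, Fin.ext_iff, Fin.val_last, add_tsub_cancel_right]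
    split_ifs <;> ring_nf
  have hderiv := hasDerivAt_det (A := fun s => hankel (c · s) m (k + 1))
    (A' := hankel (fun K => ((K + 1 : ℕ) : ℝ) * c (K + 1) t) m (k + 1)
      + (u₀ t / c 0 t) • hankel (fun K => ∑ l ∈ range (K + 1), c l t * c (K - l) t) m (k + 1))
    (t := t) fun i j => hc _ t
  refine hderiv.congr_deriv ?_
  rw [Matrix.mul_add, trace_add, mul_smul_comm, trace_smul, smul_eq_mul,
    trace_adjugate_hankel_mul_hankel_derivative, trace_adjugate_hankel_mul_hankel_selfConv _ m hm,
    hG, hH, show 2 * (k + 1) - 1 + m = 2 * k + 1 + m by omega]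
  field_simp [hc0 t]
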